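/- Let G be a disconnected graph with exactly one nontrivial connected component G_1 and t > 0 trivial components. If diam(G_1) > 3, then the geodetic hull number of the complementary prism equals exactly h(G\bar{G}) = t + 2. -/

import Mathlib

open SimpleGraph

/-- The geodetic closed interval `I[u,v]`: `u`, `v`, and all vertices lying on
some shortest `u`–`v` path. -/
def geoInterval {V : Type*} (G : SimpleGraph V) (u v : V) : Set V :=
  {w | w = u ∨ w = v ∨ (G.Reachable u v ∧ G.dist u w + G.dist w v = G.dist u v)}

/-- A set is geodetically convex if it is closed under intervals. -/
def IsGeoConvex {V : Type*} (G : SimpleGraph V) (S : Set V) : Prop :=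
  ∀ u ∈ S, ∀ v ∈ S, geoInterval G u v ⊆ S

/-- The geodetic convex hull: the smallest convex set containing `S`. -/
def geoHull {V : Type*} (G : SimpleGraph V) (S : Set V) : Set V :=
  ⋂₀ {T | IsGeoConvex G T ∧ S ⊆ T}

/-- `S` is a hull set if its convex hull is the whole vertex set. -/
def IsHullSet {V : Type*} (G : SimpleGraph V) (S : Set V) : Prop :=
  geoHull G S = Set.univ

/-- The geodetic hull number: minimum cardinality of a hull set. -/
noncomputable def hullNumber {V : Type*} (G : SimpleGraph V) : ℕ :=
  sInf {n | ∃ S : Set V, S.ncard = n ∧ IsHullSet G S}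

/-- A vertex is simplicial if its closed neighborhood induces a clique. -/
def IsSimplicial {V : Type*} (G : SimpleGraph V) (v : V) : Prop :=
  ∀ a ∈ G.neighborSet v, ∀ b ∈ G.neighborSet v, a ≠ b → G.Adj a b

/-- The complementary prism `G G̅`: disjoint union of `G` (left copies) and its
complement (right copies), plus a perfect matching between corresponding vertices. -/
def compPrism {V : Type*} (G : SimpleGraph V) : SimpleGraph (V ⊕ V) where
  Adj x y :=
    match x, y with
    | .inl u, .inl w => G.Adj u w
    | .inr u, .inr w => u ≠ w ∧ ¬ G.Adj u w
    | .inl u, .inr w => u = w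
    | .inr u, .inl w => u = w
  symm := by
    refine ⟨?_⟩
    rintro (u | u) (w | w) h
    · exact h.symm
    · exact h.symm
    · exact h.symm
    · exact ⟨h.1.symm, fun a => h.2 a.symm⟩
  loopless := by
    refine ⟨?_⟩
    rintro (u | u) h
    · exact G.irrefl h
    · exact h.1 rfl

/-!
The left copy of an isolated vertex of `G` has only its right copy as a neighbour in `G G̅`, so it
is simplicial and lies in every hull set. One further vertex `z` does not suffice: both copies of
the isolated vertices and of the vertex underlying `z` form a convex set, because these vertices
lie in pairwise distinct components of `G`.

Conversely, take a geodesic `x₀x₁x₂x₃x₄` of `G₁` (it exists since `diam G₁ > 3`) and the left copies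
of the isolated vertices, of `x₀` and of `x₃`. Their hull contains the left copy of `x₁`, which lies
between those of `x₀` and `x₃`, and the right copy of every vertex whose left copy it contains, via
the geodesic towards the left copy of an isolated vertex. Every other right copy is a common
neighbour of the right copies of the ends of `x₀x₁` or of `x₃x₄`, unless its vertex is a common
neighbour of `x₁` and `x₃`. Finally the left copies spread along the edges of `G₁`.
-/

namespace SimpleGraph

variable {V : Type*} {G : SimpleGraph V} {u v w : V}

lemma Adj.dist_le_two (h₁ : G.Adj u w) (h₂ : G.Adj w v) : G.dist u v ≤ 2 := by
  simpa using dist_le (.cons h₁ (.cons h₂ .nil))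

lemma ne_and_not_adj_of_two_lt_dist (h : 2 < G.dist u v) (hw : u = w ∨ G.Adj u w) :
    v ≠ w ∧ ¬G.Adj v w := by
  rcases hw with rfl | huw
  · refine ⟨fun hvu => by simp [hvu] at h, fun hvu => ?_⟩
    rw [dist_eq_one_iff_adj.mpr hvu.symm] at h
    omega
  · refine ⟨?_, fun hvw => ?_⟩
    · rintro rfl
      rw [dist_eq_one_iff_adj.mpr huw] at h
      omega
    · have := huw.dist_le_two hvw.symm
      omega

lemma two_lt_edist_of_not_reachable (h : ¬G.Reachable u v) : 2 < G.edist u v := by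
  rw [edist_eq_top_of_not_reachable h]
  exact ENat.natCast_lt_top 2

lemma dist_eq_two_of_adj_of_adj (hne : u ≠ v) (hn : ¬G.Adj u v) (h₁ : G.Adj u w)
    (h₂ : G.Adj w v) : G.dist u v = 2 :=
  le_antisymm (h₁.dist_le_two h₂)
    ((h₁.reachable.trans h₂.reachable).one_lt_dist_of_ne_of_not_adj hne hn)

lemma dist_eq_two_iff :
    G.dist u v = 2 ↔ u ≠ v ∧ ¬G.Adj u v ∧ (G.commonNeighbors u v).Nonempty := by
  refine ⟨fun h => edist_eq_two_iff.mp ?_, fun ⟨hne, hn, w, hw⟩ => ?_⟩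
  · rw [← (Reachable.of_dist_ne_zero (by omega)).coe_dist_eq_edist, h]
    rfl
  · rw [mem_commonNeighbors] at hw
    exact dist_eq_two_of_adj_of_adj hne hn hw.1 hw.2.symm

lemma exists_adj_dist_add_one_eq (h : G.dist u v ≠ 0) :
    ∃ m, G.Adj u m ∧ G.dist m v + 1 = G.dist u v := by
  obtain ⟨p, hp⟩ := exists_walk_of_dist_ne_zero h
  cases p with
  | nil => exact absurd hp.symm h
  | cons hadj q =>
    refine ⟨_, hadj, le_antisymm ?_ ?_⟩
    · simpa [← hp] using dist_le q
    · have := hadj.reachable.dist_triangle_left v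
      rw [dist_eq_one_iff_adj.mpr hadj] at this
      omega

lemma Walk.dist_getVert_getVert {p : G.Walk u v} (hp : p.length = G.dist u v) {i j : ℕ}
    (hij : i ≤ j) (hj : j ≤ p.length) : G.dist (p.getVert i) (p.getVert j) = j - i := by
  have h := length_eq_dist_of_subwalk hp (((p.take j).isSubwalk_drop i).trans (p.isSubwalk_take j))
  rw [Walk.drop_length, Walk.take_length, Walk.take_getVert, min_eq_left hj,
    min_eq_right hij] at h
  exact h.symm

lemma IsIsolated.not_reachable (hv : G.IsIsolated v) (h : v ≠ w) : ¬G.Reachable v w :=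
  not_reachable_of_neighborSet_left_eq_empty h hv.neighborSet_eq_empty

lemma supp_connectedComponentMk_nontrivial_iff :
    (G.connectedComponentMk v).supp.Nontrivial ↔ ¬G.IsIsolated v := by
  constructor
  · rintro ⟨x, hx, y, hy, hxy⟩ hv
    have hsupp : ∀ x ∈ (G.connectedComponentMk v).supp, x = v := fun x hx =>
      by_contra fun h => hv.not_reachable (Ne.symm h) (ConnectedComponent.exact hx).symm
    exact hxy ((hsupp x hx).trans (hsupp y hy).symm)
  · rw [← exists_adj_iff_not_isIsolated]
    rintro ⟨w, hvw⟩
    exact ⟨v, rfl, w, (ConnectedComponent.sound hvw.reachable).symm, hvw.ne⟩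

lemma card_trivial_connectedComponent :
    Nat.card {C : G.ConnectedComponent // ¬C.supp.Nontrivial} = {v | G.IsIsolated v}.ncard := by
  rw [← Nat.card_coe_set_eq]
  refine (Nat.card_eq_of_bijective
    (fun v => ⟨G.connectedComponentMk v,
      supp_connectedComponentMk_nontrivial_iff.not_left.mpr v.2⟩)
    ⟨?_, ?_⟩).symm
  · rintro ⟨x, hx⟩ ⟨y, hy⟩ hxy
    by_contra hne
    exact hx.not_reachable (fun h => hne (Subtype.ext h))
      (ConnectedComponent.exact (congrArg Subtype.val hxy))
  · rintro ⟨C, hC⟩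
    induction C using ConnectedComponent.ind with
    | h v =>
      exact ⟨⟨v, not_not.mp (supp_connectedComponentMk_nontrivial_iff.not.mp hC)⟩, rfl⟩

lemma ConnectedComponent.dist_induce_supp_le (C : G.ConnectedComponent) (x y : C.supp) :
    (G.induce C.supp).dist x y ≤ G.dist x y := by
  classical
  obtain ⟨p, hp⟩ := (C.reachable_of_mem_supp x.2 y.2).exists_walk_length_eq_dist
  have hsupp : ∀ z ∈ p.support, z ∈ C.supp := fun z hz =>
    (C.mem_supp_iff z).mpr ((ConnectedComponent.sound (p.takeUntil z hz).reachable.symm).trans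
      x.2)
  calc (G.induce C.supp).dist x y ≤ (p.induce C.supp hsupp).length := dist_le _
    _ = G.dist x y := by rw [← Walk.length_map, Walk.map_induce]; exact hp

end SimpleGraph

section GeodeticConvexity

variable {V : Type*} {H : SimpleGraph V} {S T : Set V} {p q v w : V}

lemma subset_geoHull : S ⊆ geoHull H S :=
  fun _ hx => Set.mem_sInter.mpr fun _ hT => hT.2 hx

lemma isGeoConvex_geoHull : IsGeoConvex H (geoHull H S) :=
  fun p hp q hq _ hw => Set.mem_sInter.mpr fun T hT =>
    hT.1 p (Set.mem_sInter.mp hp T hT) q (Set.mem_sInter.mp hq T hT) hw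

lemma geoHull_subset (hT : IsGeoConvex H T) (hST : S ⊆ T) : geoHull H S ⊆ T :=
  Set.sInter_subset_of_mem ⟨hT, hST⟩

lemma IsGeoConvex.mem_of_dist_add_eq (hT : IsGeoConvex H T) (hp : p ∈ T) (hq : q ∈ T)
    (hpq : H.Reachable p q) (h : H.dist p w + H.dist w q = H.dist p q) : w ∈ T :=
  hT p hp q hq (Or.inr (Or.inr ⟨hpq, h⟩))

lemma IsGeoConvex.mem_of_adj_of_adj (hT : IsGeoConvex H T) (hp : p ∈ T) (hq : q ∈ T)
    (hne : p ≠ q) (hn : ¬H.Adj p q) (h₁ : H.Adj p w) (h₂ : H.Adj w q) : w ∈ T :=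
  hT.mem_of_dist_add_eq hp hq (h₁.reachable.trans h₂.reachable) (by
    rw [dist_eq_one_iff_adj.mpr h₁, dist_eq_one_iff_adj.mpr h₂,
      dist_eq_two_of_adj_of_adj hne hn h₁ h₂])

lemma isGeoConvex_of_forall_adj (hH : H.Preconnected)
    (hT : ∀ p ∈ T, ∀ q ∈ T, ∀ m, H.Adj p m → H.dist m q + 1 = H.dist p q → m ∈ T) :
    IsGeoConvex H T := by
  intro p hp q hq w hw
  rcases hw with rfl | rfl | ⟨-, hsum⟩
  · exact hp
  · exact hq
  suffices ∀ n, ∀ p ∈ T, H.dist p w = n →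
      H.dist p w + H.dist w q = H.dist p q → w ∈ T from
    this _ p hp rfl hsum
  intro n
  induction n with
  | zero =>
    intro p hp hpw _
    rwa [← (hH p w).dist_eq_zero_iff.mp hpw]
  | succ n ih =>
    intro p hp hpw hsum
    -- a first step from `p` towards `w` is also a first step towards `q`
    obtain ⟨m, hpm, hmw⟩ := exists_adj_dist_add_one_eq (G := H) (u := p) (v := w) (by omega)
    have hmq := (hH m w).dist_triangle_left q
    have hpq := hpm.reachable.dist_triangle_left q
    rw [dist_eq_one_iff_adj.mpr hpm] at hpq
    exact ih m (hT p hp q hq m hpm (by omega)) (by omega) (by omega)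

lemma IsSimplicial.isGeoConvex_compl_singleton (hH : H.Preconnected) (hv : IsSimplicial H v) :
    IsGeoConvex H {v}ᶜ := by
  refine isGeoConvex_of_forall_adj hH ?_
  rintro p hp q hq m hpm hmq rfl
  obtain ⟨m', hmm', hm'q⟩ := exists_adj_dist_add_one_eq ((hH m q).dist_eq_zero_iff.not.mpr
    (Ne.symm hq))
  have hpq := (hH p m').dist_triangle_left q
  by_cases hpm' : p = m'
  · subst hpm'
    omega
  · -- the neighbours `p` and `m'` of the simplicial vertex `m` are adjacent: a shortcut
    rw [dist_eq_one_iff_adj.mpr (hv p hpm.symm m' hmm' hpm')] at hpq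
    omega

lemma IsHullSet.mem_of_isSimplicial (hH : H.Preconnected) (hS : IsHullSet H S)
    (hv : IsSimplicial H v) : v ∈ S := by
  by_contra hvS
  have := geoHull_subset (hv.isGeoConvex_compl_singleton hH)
    (fun x hx (hxv : x = v) => hvS (hxv ▸ hx))
  rw [hS] at this
  exact this (Set.mem_univ v) rfl

end GeodeticConvexity

section CompPrism

variable {V : Type*} {G : SimpleGraph V} {x z : V}

@[simp] lemma compPrism_adj_inl_inl : (compPrism G).Adj (.inl x) (.inl z) ↔ G.Adj x z := Iff.rfl

@[simp] lemma compPrism_adj_inr_inr :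
    (compPrism G).Adj (.inr x) (.inr z) ↔ x ≠ z ∧ ¬G.Adj x z := Iff.rfl

@[simp] lemma compPrism_adj_inl_inr : (compPrism G).Adj (.inl x) (.inr z) ↔ x = z := Iff.rfl

@[simp] lemma compPrism_adj_inr_inl : (compPrism G).Adj (.inr x) (.inl z) ↔ x = z := Iff.rfl

lemma compPrism_preconnected : (compPrism G).Preconnected := by
  have hlr : ∀ x, (compPrism G).Reachable (.inl x) (.inr x) := fun x =>
    (compPrism_adj_inl_inr.mpr rfl).reachable
  have hll : ∀ x z, (compPrism G).Reachable (.inl x) (.inl z) := by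
    intro x z
    by_cases hxz : x = z
    · rw [hxz]
    by_cases hadj : G.Adj x z
    · exact (compPrism_adj_inl_inl.mpr hadj).reachable
    · exact (hlr x).trans
        ((compPrism_adj_inr_inr.mpr ⟨hxz, hadj⟩).reachable.trans (hlr z).symm)
  rintro (x | x) (z | z)
  · exact hll x z
  · exact (hll x z).trans (hlr z)
  · exact (hlr x).symm.trans (hll x z)
  · exact (hlr x).symm.trans ((hll x z).trans (hlr z))

lemma isSimplicial_compPrism_inl (hx : G.IsIsolated x) :
    IsSimplicial (compPrism G) (.inl x) := by
  have hnbr : ∀ m, (compPrism G).Adj (.inl x) m → m = .inr x := by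
    rintro (y | y) h
    · exact absurd h (hx y)
    · rw [compPrism_adj_inl_inr.mp h]
  intro a ha b hb hab
  exact absurd ((hnbr a ha).trans (hnbr b hb).symm) hab

lemma compPrism_dist_inl_inr_self : (compPrism G).dist (.inl x) (.inr x) = 1 :=
  dist_eq_one_iff_adj.mpr rfl

lemma compPrism_dist_inr_inl (h : x ≠ z) : (compPrism G).dist (.inr x) (.inl z) = 2 := by
  have hne : (Sum.inr x : V ⊕ V) ≠ .inl z := Sum.inr_ne_inl
  by_cases hadj : G.Adj x z
  · exact dist_eq_two_of_adj_of_adj hne (by simpa using h) (compPrism_adj_inr_inl.mpr rfl)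
      (compPrism_adj_inl_inl.mpr hadj)
  · exact dist_eq_two_of_adj_of_adj hne (by simpa using h)
      (compPrism_adj_inr_inr.mpr ⟨h, hadj⟩) (compPrism_adj_inr_inl.mpr rfl)

lemma compPrism_dist_inl_inr (h : x ≠ z) : (compPrism G).dist (.inl x) (.inr z) = 2 := by
  rw [dist_comm]
  exact compPrism_dist_inr_inl h.symm

lemma compPrism_dist_inl_inr_le_two : (compPrism G).dist (.inl x) (.inr z) ≤ 2 := by
  rcases eq_or_ne x z with rfl | h
  · simp [compPrism_dist_inl_inr_self]
  · exact (compPrism_dist_inl_inr h).le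

lemma compPrism_dist_inr_inl_le_two : (compPrism G).dist (.inr x) (.inl z) ≤ 2 := by
  rw [dist_comm]
  exact compPrism_dist_inl_inr_le_two

lemma compPrism_dist_inl_inl_eq_two (h : G.dist x z = 2) :
    (compPrism G).dist (.inl x) (.inl z) = 2 := by
  obtain ⟨hne, hn, w, hw⟩ := dist_eq_two_iff.mp h
  rw [mem_commonNeighbors] at hw
  exact dist_eq_two_of_adj_of_adj (by simpa using hne) (by simpa using hn)
    (compPrism_adj_inl_inl.mpr hw.1) (compPrism_adj_inl_inl.mpr hw.2.symm)

lemma compPrism_dist_inl_inl_eq_three (h : 2 < G.edist x z) :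
    (compPrism G).dist (.inl x) (.inl z) = 3 := by
  obtain ⟨hne, hn, hc⟩ := two_lt_edist_iff.mp h
  have hc' : (compPrism G).commonNeighbors (.inl x) (.inl z) = ∅ := by
    refine Set.eq_empty_iff_forall_notMem.mpr ?_
    rintro (m | m) hm <;> rw [mem_commonNeighbors] at hm
    · exact (Set.eq_empty_iff_forall_notMem.mp hc) m (G.mem_commonNeighbors.mpr hm)
    · exact hne (hm.1.trans hm.2.symm)
  have hlt := two_lt_edist_iff.mpr ⟨by simpa using hne, by simpa using hn, hc'⟩
  rw [← (compPrism_preconnected _ _).coe_dist_eq_edist] at hlt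
  have hle : (compPrism G).dist (.inl x) (.inl z) ≤ 3 := by
    simpa using dist_le (.cons (compPrism_adj_inl_inr.mpr rfl)
      (.cons (compPrism_adj_inr_inr.mpr ⟨hne, hn⟩)
        (.cons (compPrism_adj_inr_inl.mpr rfl) .nil)))
  norm_cast at hlt
  omega

end CompPrism

section LowerBound

variable {V : Type*} {G : SimpleGraph V} {B : Set V} {c e : V}

lemma compPrism_dist_inl_le_of_adj (hB : B.Pairwise fun c d => ¬G.Reachable c d) (hc : c ∈ B)
    (hce : G.Adj c e) {q : V ⊕ V} (hq : q ∈ Sum.inl '' B ∪ Sum.inr '' B) :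
    (compPrism G).dist (.inl c) q ≤ (compPrism G).dist (.inl e) q := by
  rcases hq with ⟨d, hd, rfl⟩ | ⟨d, hd, rfl⟩
  · by_cases hcd : c = d
    · simp [hcd]
    · have hcd' : ¬G.Reachable c d := hB hc hd hcd
      rw [compPrism_dist_inl_inl_eq_three (two_lt_edist_of_not_reachable hcd'),
        compPrism_dist_inl_inl_eq_three (two_lt_edist_of_not_reachable
          fun h => hcd' (hce.reachable.trans h))]
  · have hed : e ≠ d := by
      rintro rfl
      exact hce.ne (hB.eq hc hd (not_not.mpr hce.reachable))
    rw [compPrism_dist_inl_inr hed]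
    exact compPrism_dist_inl_inr_le_two

lemma compPrism_dist_inr_le_of_notMem (hB : B.Pairwise fun c d => ¬G.Reachable c d)
    (hc : c ∈ B) (he : e ∉ B) {q : V ⊕ V} (hq : q ∈ Sum.inl '' B ∪ Sum.inr '' B) :
    (compPrism G).dist (.inr c) q ≤ (compPrism G).dist (.inr e) q := by
  rcases hq with ⟨d, hd, rfl⟩ | ⟨d, hd, rfl⟩
  · rw [compPrism_dist_inr_inl (fun (hed : e = d) => he (hed ▸ hd))]
    exact compPrism_dist_inr_inl_le_two
  · have hed : (compPrism G).dist (.inr e) (.inr d) ≠ 0 := fun h =>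
      he (Sum.inr_injective ((compPrism_preconnected _ _).dist_eq_zero_iff.mp h) ▸ hd)
    have hcd : (compPrism G).dist (.inr c) (.inr d) ≤ 1 := by
      by_cases hcd : c = d
      · simp [hcd]
      · exact (dist_eq_one_iff_adj.mpr (compPrism_adj_inr_inr.mpr
          ⟨hcd, fun h => hB hc hd hcd h.reachable⟩)).le
    omega

lemma isGeoConvex_compPrism_inl_image_union_inr_image
    (hB : B.Pairwise fun c d => ¬G.Reachable c d) :
    IsGeoConvex (compPrism G) (Sum.inl '' B ∪ Sum.inr '' B) := by
  refine isGeoConvex_of_forall_adj compPrism_preconnected ?_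
  rintro _ (⟨c, hc, rfl⟩ | ⟨c, hc, rfl⟩) q hq (e | e) hce hm
  · have := compPrism_dist_inl_le_of_adj hB hc hce hq
    omega
  · exact .inr ⟨c, hc, congrArg _ (compPrism_adj_inl_inr.mp hce)⟩
  · exact .inl ⟨c, hc, congrArg _ (compPrism_adj_inr_inl.mp hce)⟩
  · by_cases he : e ∈ B
    · exact .inr ⟨e, he, rfl⟩
    · have := compPrism_dist_inr_le_of_notMem hB hc he hq
      omega

lemma not_isHullSet_compPrism_of_subset_insert {S : Set (V ⊕ V)} {x y : V} (hxy : G.Adj x y)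
    (z : V ⊕ V) (hS : S ⊆ insert z (Sum.inl '' {v | G.IsIsolated v})) :
    ¬IsHullSet (compPrism G) S := by
  intro hhull
  obtain ⟨v, hv⟩ : ∃ v, z = .inl v ∨ z = .inr v := by rcases z with v | v <;> simp
  set B := insert v {v | G.IsIsolated v}
  have hB : B.Pairwise fun c d => ¬G.Reachable c d := by
    rintro c (rfl | hc) d (rfl | hd) hcd
    · exact absurd rfl hcd
    · exact fun h => hd.not_reachable hcd.symm h.symm
    · exact hc.not_reachable hcd
    · exact hc.not_reachable hcd
  have hST : S ⊆ Sum.inl '' B ∪ Sum.inr '' B := by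
    intro w hw
    rcases hS hw with rfl | ⟨a, ha, rfl⟩
    · rcases hv with rfl | rfl
      · exact .inl ⟨v, .inl rfl, rfl⟩
      · exact .inr ⟨v, .inl rfl, rfl⟩
    · exact .inl ⟨a, .inr ha, rfl⟩
  have hcover := geoHull_subset (isGeoConvex_compPrism_inl_image_union_inr_image hB) hST
  rw [hhull] at hcover
  obtain ⟨c, hc, hcv⟩ : ∃ c, ¬G.IsIsolated c ∧ c ≠ v := by
    by_cases hxv : x = v
    · exact ⟨y, hxy.not_isIsolated_right, fun h => hxy.ne (hxv.trans h.symm)⟩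
    · exact ⟨x, hxy.not_isIsolated_left, hxv⟩
  obtain ⟨c', hc', hcc'⟩ | ⟨c', -, hcc'⟩ := hcover (Set.mem_univ (Sum.inl c))
  · obtain rfl := Sum.inl_injective hcc'
    exact hc'.elim hcv hc
  · exact Sum.inr_ne_inl hcc'

lemma IsHullSet.ncard_isolated_add_two_le [Finite V] {S : Set (V ⊕ V)}
    (hS : IsHullSet (compPrism G) S) {x y : V} (hxy : G.Adj x y) :
    {v | G.IsIsolated v}.ncard + 2 ≤ S.ncard := by
  set A := {v | G.IsIsolated v}
  have hAS : Sum.inl '' A ⊆ S := by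
    rintro _ ⟨a, ha, rfl⟩
    exact hS.mem_of_isSimplicial compPrism_preconnected (isSimplicial_compPrism_inl ha)
  by_contra! hlt
  have hcard := Set.ncard_sdiff_add_ncard_of_subset hAS
  rw [Set.ncard_image_of_injective _ Sum.inl_injective] at hcard
  have hsub : (S \ Sum.inl '' A).Subsingleton := by
    rw [← Set.ncard_le_one_iff_subsingleton]
    omega
  obtain ⟨z, hz⟩ : ∃ z, S \ Sum.inl '' A ⊆ {z} := by
    rcases hsub.eq_empty_or_singleton with h | ⟨z, h⟩
    · exact ⟨.inl x, by simp [h]⟩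
    · exact ⟨z, h.le⟩
  refine not_isHullSet_compPrism_of_subset_insert hxy z (fun w hw => ?_) hS
  by_cases hwA : w ∈ Sum.inl '' A
  · exact .inr hwA
  · exact .inl (hz ⟨hw, hwA⟩)

end LowerBound

section UpperBound

variable {V : Type*} {G : SimpleGraph V} {K : Set (V ⊕ V)} {x y z : V}

lemma IsGeoConvex.compPrism_inr_mem_of_inl_mem (hK : IsGeoConvex (compPrism G) K)
    (hx : .inl x ∈ K) (hz : .inl z ∈ K) (h : 2 < G.edist x z) : .inr x ∈ K :=
  hK.mem_of_dist_add_eq hx hz (compPrism_preconnected _ _) (by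
    rw [compPrism_dist_inl_inr_self, compPrism_dist_inr_inl (two_lt_edist_iff.mp h).1,
      compPrism_dist_inl_inl_eq_three h])

lemma IsGeoConvex.compPrism_inr_mem_of_adj (hK : IsGeoConvex (compPrism G) K)
    (hx : .inr x ∈ K) (hy : .inr y ∈ K) (hxy : G.Adj x y) (hxz : x ≠ z ∧ ¬G.Adj x z)
    (hyz : y ≠ z ∧ ¬G.Adj y z) : .inr z ∈ K :=
  hK.mem_of_adj_of_adj hx hy (by simpa using hxy.ne) (by simp [hxy]) hxz
    (compPrism_adj_inr_inr.mpr hyz).symm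

lemma IsGeoConvex.compPrism_inl_mem_of_reachable (hK : IsGeoConvex (compPrism G) K)
    (hinr : ∀ c, .inr c ∈ K) (hx : .inl x ∈ K) (h : G.Reachable x z) : .inl z ∈ K := by
  obtain ⟨p⟩ := h
  induction p with
  | nil => exact hx
  | cons hadj _ ih =>
    exact ih (hK.mem_of_adj_of_adj (hinr _) hx Sum.inr_ne_inl (by simpa using hadj.ne')
      (compPrism_adj_inr_inl.mpr rfl) (compPrism_adj_inl_inl.mpr hadj.symm))

/-- With `x₀, …, x₄` the start of a geodesic, every vertex other than a common neighbour of
`x₁` and `x₃` lies outside the closed neighbourhoods of both ends of `x₀x₁` or of `x₃x₄`. -/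
lemma IsGeoConvex.compPrism_inr_mem_of_walk (hK : IsGeoConvex (compPrism G) K) {a : V}
    (ha : G.IsIsolated a) (haK : .inl a ∈ K) {u v : V} {p : G.Walk u v}
    (hp : p.length = G.dist u v) (h4 : 4 ≤ p.length) (h0 : .inl u ∈ K)
    (h1 : .inl (p.getVert 1) ∈ K) (h3 : .inl (p.getVert 3) ∈ K) (c : V) : .inr c ∈ K := by
  rw [← p.getVert_zero] at h0
  set x := p.getVert
  have hadj : ∀ i < 4, G.Adj (x i) (x (i + 1)) := fun i hi => p.adj_getVert_succ (by omega)
  have hd : ∀ i j, i ≤ j ∧ j ≤ 4 → G.dist (x i) (x j) = j - i :=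
    fun i j hij => p.dist_getVert_getVert hp hij.1 (by omega)
  have far : ∀ i j, i + 3 ≤ j ∧ j ≤ 4 →
      ∀ c, x i = c ∨ G.Adj (x i) c → x j ≠ c ∧ ¬G.Adj (x j) c :=
    fun i j hij _ => ne_and_not_adj_of_two_lt_dist (by rw [hd i j (by omega)]; omega)
  have far' : ∀ i j, i + 3 ≤ j ∧ j ≤ 4 →
      ∀ c, x j = c ∨ G.Adj (x j) c → x i ≠ c ∧ ¬G.Adj (x i) c :=
    fun i j hij _ => ne_and_not_adj_of_two_lt_dist (by rw [dist_comm, hd i j (by omega)]; omega)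
  have hinr : ∀ c, ¬G.IsIsolated c → .inl c ∈ K → .inr c ∈ K := fun c hc hcK =>
    hK.compPrism_inr_mem_of_inl_mem hcK haK (two_lt_edist_of_not_reachable fun h =>
      ha.not_reachable (fun (hac : a = c) => hc (hac ▸ ha)) h.symm)
  have hR0 := hinr _ (hadj 0 (by omega)).not_isIsolated_left h0
  have hR1 := hinr _ (hadj 1 (by omega)).not_isIsolated_left h1
  have hR3 := hinr _ (hadj 3 (by omega)).not_isIsolated_left h3
  have hR4 := hK.compPrism_inr_mem_of_adj hR0 hR1 (hadj 0 (by omega))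
    (far' 0 4 (by omega) _ (.inl rfl)) (far' 1 4 (by omega) _ (.inl rfl))
  by_cases hc0 : x 0 = c ∨ G.Adj (x 0) c
  · exact hK.compPrism_inr_mem_of_adj hR3 hR4 (hadj 3 (by omega))
      (far 0 3 (by omega) c hc0) (far 0 4 (by omega) c hc0)
  by_cases hc4 : x 4 = c ∨ G.Adj (x 4) c
  · exact hK.compPrism_inr_mem_of_adj hR0 hR1 (hadj 0 (by omega))
      (far' 0 4 (by omega) c hc4) (far' 1 4 (by omega) c hc4)
  by_cases hc1 : x 1 = c ∨ G.Adj (x 1) c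
  swap
  · exact hK.compPrism_inr_mem_of_adj hR0 hR1 (hadj 0 (by omega)) (not_or.mp hc0) (not_or.mp hc1)
  by_cases hc3 : x 3 = c ∨ G.Adj (x 3) c
  swap
  · exact hK.compPrism_inr_mem_of_adj hR3 hR4 (hadj 3 (by omega)) (not_or.mp hc3) (not_or.mp hc4)
  obtain ⟨ne13, n13, -⟩ := dist_eq_two_iff.mp (hd 1 3 (by omega))
  obtain rfl | h1c := hc1
  · exact (hc3.elim (fun h => ne13 h.symm) fun h => n13 h.symm).elim
  obtain rfl | h3c := hc3
  · exact (n13 h1c).elim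
  exact hinr c h1c.not_isIsolated_right
    (hK.mem_of_adj_of_adj h1 h3 (by simpa using ne13) (by simpa using n13)
      (compPrism_adj_inl_inl.mpr h1c) (compPrism_adj_inl_inl.mpr h3c.symm))

lemma isHullSet_compPrism_of_walk {a : V} (ha : G.IsIsolated a) {u v : V}
    {p : G.Walk u v} (hp : p.length = G.dist u v) (h4 : 4 ≤ p.length)
    (hu : ∀ c, ¬G.IsIsolated c → G.Reachable u c) :
    IsHullSet (compPrism G)
      (insert (.inl u) (insert (.inl (p.getVert 3)) (Sum.inl '' {v | G.IsIsolated v}))) := by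
  set K := geoHull (compPrism G)
    (insert (.inl u) (insert (.inl (p.getVert 3)) (Sum.inl '' {v | G.IsIsolated v})))
  have hK : IsGeoConvex (compPrism G) K := isGeoConvex_geoHull
  have h0 : .inl u ∈ K := subset_geoHull (.inl rfl)
  have h3 : .inl (p.getVert 3) ∈ K := subset_geoHull (.inr (.inl rfl))
  have hA : ∀ c, G.IsIsolated c → .inl c ∈ K :=
    fun c hc => subset_geoHull (.inr (.inr ⟨c, hc, rfl⟩))
  have h1 : .inl (p.getVert 1) ∈ K := by
    have d03 := p.dist_getVert_getVert hp (i := 0) (j := 3) (by omega) (by omega)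
    have h01 := p.adj_getVert_succ (i := 0) (by omega)
    rw [p.getVert_zero] at d03 h01
    refine hK.mem_of_dist_add_eq h0 h3 (compPrism_preconnected _ _) ?_
    rw [dist_eq_one_iff_adj.mpr (compPrism_adj_inl_inl.mpr h01),
      compPrism_dist_inl_inl_eq_two (p.dist_getVert_getVert hp (by omega) (by omega)),
      compPrism_dist_inl_inl_eq_three (by
        rw [← (Reachable.of_dist_ne_zero (by omega)).coe_dist_eq_edist, d03]
        norm_num)]
  have hinr := hK.compPrism_inr_mem_of_walk ha (hA a ha) hp h4 h0 h1 h3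
  refine Set.eq_univ_of_forall ?_
  rintro (c | c)
  · by_cases hc : G.IsIsolated c
    · exact hA c hc
    · exact hK.compPrism_inl_mem_of_reachable hinr h0 (hu c hc)
  · exact hinr c

lemma exists_isHullSet_compPrism_ncard_eq [Finite V] {a : V}
    (ha : G.IsIsolated a) {u v : V} {p : G.Walk u v} (hp : p.length = G.dist u v)
    (h4 : 4 ≤ p.length) (hu : ∀ c, ¬G.IsIsolated c → G.Reachable u c) :
    ∃ S, S.ncard = {v | G.IsIsolated v}.ncard + 2 ∧ IsHullSet (compPrism G) S := by
  refine ⟨_, ?_, isHullSet_compPrism_of_walk ha hp h4 hu⟩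
  have d03 := p.dist_getVert_getVert hp (i := 0) (j := 3) (by omega) (by omega)
  rw [p.getVert_zero] at d03
  have hu' := (p.adj_getVert_succ (i := 0) (by omega)).not_isIsolated_left
  have h3 := (p.adj_getVert_succ (i := 2) (by omega)).not_isIsolated_right
  rw [p.getVert_zero] at hu'
  rw [Set.ncard_insert_of_notMem, Set.ncard_insert_of_notMem,
    Set.ncard_image_of_injective _ Sum.inl_injective]
  · simpa using h3
  · rintro (h | ⟨c, hc, h⟩)
    · simp [Sum.inl_injective h] at d03
    · exact hu' (Sum.inl_injective h ▸ hc)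

end UpperBound

theorem hullNumber_compPrism_one_nontrivial_eq_diam_gt_three_general {V : Type*} [Fintype V]
    (G : SimpleGraph V) (t : ℕ)
    (C₁ : G.ConnectedComponent)
    (huniq : ∀ C : G.ConnectedComponent, C.supp.Nontrivial → C = C₁)
    (ht : t = Nat.card {C : G.ConnectedComponent // ¬ C.supp.Nontrivial})
    (ht0 : 0 < t)
    (hdiam : ∃ u v : C₁.supp, 3 < (G.induce C₁.supp).dist u v) :
    hullNumber (compPrism G) = t + 2 := by
  rw [card_trivial_connectedComponent] at ht
  subst ht
  obtain ⟨a, ha⟩ := Set.nonempty_of_ncard_ne_zero ht0.ne'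
  obtain ⟨u, v, huv⟩ := hdiam
  have hu : ∀ c, ¬G.IsIsolated c → G.Reachable u c := fun c hc =>
    C₁.reachable_of_mem_supp u.2 (huniq _ (supp_connectedComponentMk_nontrivial_iff.mpr hc))
  obtain ⟨p, hp⟩ := (C₁.reachable_of_mem_supp u.2 v.2).exists_walk_length_eq_dist
  have h4 : 4 ≤ p.length := hp ▸ huv.trans_le (C₁.dist_induce_supp_le u v)
  obtain ⟨S₀, hcard, hS₀⟩ := exists_isHullSet_compPrism_ncard_eq ha hp h4 hu
  refine IsLeast.csInf_eq ⟨⟨S₀, hcard, hS₀⟩, ?_⟩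
  rintro n ⟨S, rfl, hS⟩
  exact hS.ncard_isolated_add_two_le (p.adj_getVert_succ (i := 0) (by omega))

theorem hullNumber_compPrism_one_nontrivial_eq_diam_gt_three {V : Type*} [Fintype V]
    (G : SimpleGraph V) (t : ℕ) (hdisc : ¬ G.Connected)
    (C₁ : G.ConnectedComponent) (hC₁ : C₁.supp.Nontrivial)
    (huniq : ∀ C : G.ConnectedComponent, C.supp.Nontrivial → C = C₁)
    (ht : t = Nat.card {C : G.ConnectedComponent // ¬ C.supp.Nontrivial})
    (ht0 : 0 < t)
    (hdiam : ∃ u v : C₁.supp, 3 < (G.induce C₁.supp).dist u v) :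
    hullNumber (compPrism G) = t + 2 :=
  hullNumber_compPrism_one_nontrivial_eq_diam_gt_three_general G t C₁ huniq ht ht0 hdiam
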